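/- Define g(z) = e^{-1/(2z)}·√(z/(1−z))·erfi(√((1−z)/(2z))) for z ∈ (0,1), where erfi(x) = (2/√π)∫_0^x e^{t²} dt. Then g is bounded on (0,1) and g(z) → 0 as z → 0⁺. -/
import Mathlib


/-- The imaginary error function erfi(x) = (2/√π)∫_0^x e^{t²} dt. -/
noncomputable def erfi (x : ℝ) : ℝ :=
  (2 / Real.sqrt Real.pi) * ∫ t in (0 : ℝ)..x, Real.exp (t ^ 2)

/-- g(z) = e^{-1/(2z)}·√(z/(1−z))·erfi(√((1−z)/(2z))). -/
noncomputable def gHom (z : ℝ) : ℝ :=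
  Real.exp (-1 / (2 * z)) * Real.sqrt (z / (1 - z)) *
    erfi (Real.sqrt ((1 - z) / (2 * z)))

lemma erfi_nonneg {x : ℝ} (hx : 0 ≤ x) : 0 ≤ erfi x := by
  apply mul_nonneg
  · positivity
  · exact intervalIntegral.integral_nonneg hx (fun t _ => (Real.exp_pos _).le)

lemma erfi_le {x : ℝ} (hx : 0 ≤ x) :
    erfi x ≤ 2 / Real.sqrt Real.pi * (Real.exp (x ^ 2) * x) := by
  have hI : (∫ t in (0:ℝ)..x, Real.exp (t ^ 2)) ≤ Real.exp (x ^ 2) * x := by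
    have := intervalIntegral.norm_integral_le_of_norm_le_const
      (a := (0:ℝ)) (b := x) (C := Real.exp (x ^ 2))
      (f := fun t => Real.exp (t ^ 2)) ?_
    · calc (∫ t in (0:ℝ)..x, Real.exp (t ^ 2))
          ≤ ‖∫ t in (0:ℝ)..x, Real.exp (t ^ 2)‖ := le_abs_self _
        _ ≤ Real.exp (x ^ 2) * |x - 0| := this
        _ = Real.exp (x ^ 2) * x := by rw [sub_zero, abs_of_nonneg hx]
    · intro t ht
      rw [Set.uIoc_of_le hx] at ht
      rw [Real.norm_eq_abs, abs_of_nonneg (Real.exp_pos _).le]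
      apply Real.exp_le_exp.mpr
      nlinarith [ht.1.le, ht.2]
  have h2 : (0:ℝ) ≤ 2 / Real.sqrt Real.pi := by positivity
  exact mul_le_mul_of_nonneg_left hI h2

lemma erfi_le' {x : ℝ} (hx : 0 < x) :
    erfi x ≤ 2 / Real.sqrt Real.pi * (Real.exp (x ^ 2) / x) := by
  have hI1 : (∫ t in (0:ℝ)..x, Real.exp (t ^ 2)) ≤ ∫ t in (0:ℝ)..x, Real.exp (x * t) := by
    apply intervalIntegral.integral_mono_on hx.le
    · exact (Real.continuous_exp.comp (continuous_pow 2)).intervalIntegrable _ _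
    · exact (Real.continuous_exp.comp (continuous_const.mul continuous_id)).intervalIntegrable _ _
    · intro t ht
      apply Real.exp_le_exp.mpr
      nlinarith [ht.1, ht.2]
  have hI2 : (∫ t in (0:ℝ)..x, Real.exp (x * t)) = x⁻¹ * Real.exp (x * x) - x⁻¹ * Real.exp 0 := by
    have := intervalIntegral.integral_eq_sub_of_hasDerivAt
      (f := fun t => x⁻¹ * Real.exp (x * t)) (a := (0:ℝ)) (b := x)
      (f' := fun t => Real.exp (x * t)) ?_ ?_
    · simpa [mul_zero] using this
    · intro t _
      have h := (((hasDerivAt_id t).const_mul x).exp).const_mul x⁻¹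
      have he : x⁻¹ * (Real.exp (x * t) * x) = Real.exp (x * t) := by
        field_simp
      simpa [he] using h
    · exact (Real.continuous_exp.comp (continuous_const.mul continuous_id)).intervalIntegrable _ _
  have hI3 : (∫ t in (0:ℝ)..x, Real.exp (x * t)) ≤ Real.exp (x ^ 2) / x := by
    rw [hI2, Real.exp_zero]
    have : x * x = x ^ 2 := by ring
    rw [this]
    have h1 : (0:ℝ) < x⁻¹ := by positivity
    rw [div_eq_inv_mul]
    nlinarith
  have h2 : (0:ℝ) ≤ 2 / Real.sqrt Real.pi := by positivity
  exact mul_le_mul_of_nonneg_left (hI1.trans hI3) h2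

lemma gHom_nonneg {z : ℝ} (hz : 0 < z) : 0 ≤ gHom z := by
  unfold gHom
  apply mul_nonneg (mul_nonneg (Real.exp_pos _).le (Real.sqrt_nonneg _))
  exact erfi_nonneg (Real.sqrt_nonneg _)

lemma key_exp {z : ℝ} (hz : 0 < z) (hz1 : z < 1) :
    Real.exp (-1 / (2 * z)) * Real.exp (Real.sqrt ((1 - z) / (2 * z)) ^ 2)
      = Real.exp (-(1/2)) := by
  have harg : (0:ℝ) ≤ (1 - z) / (2 * z) := by
    apply div_nonneg <;> linarith
  rw [Real.sq_sqrt harg, ← Real.exp_add]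
  congr 1
  field_simp
  ring

lemma key_mul {z : ℝ} (hz : 0 < z) (hz1 : z < 1) :
    Real.sqrt (z / (1 - z)) * Real.sqrt ((1 - z) / (2 * z)) = Real.sqrt (1/2) := by
  have hz' : z ≠ 0 := hz.ne'
  have h1z : (0:ℝ) < 1 - z := by linarith
  have h1z' : (1:ℝ) - z ≠ 0 := h1z.ne'
  rw [← Real.sqrt_mul (by positivity)]
  congr 1
  field_simp

lemma key_div {z : ℝ} (hz : 0 < z) (hz1 : z < 1) :
    Real.sqrt (z / (1 - z)) / Real.sqrt ((1 - z) / (2 * z))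
      = Real.sqrt 2 * (z / (1 - z)) := by
  have h1z : (0:ℝ) < 1 - z := by linarith
  rw [← Real.sqrt_div (by positivity)]
  have heq : z / (1 - z) / ((1 - z) / (2 * z)) = 2 * (z / (1 - z)) ^ 2 := by
    field_simp
  rw [heq, Real.sqrt_mul (by norm_num), Real.sqrt_sq (by positivity)]

lemma gHom_le_const {z : ℝ} (hz : 0 < z) (hz1 : z < 1) :
    gHom z ≤ 2 / Real.sqrt Real.pi * Real.sqrt (1/2) * Real.exp (-(1/2)) := by
  set x := Real.sqrt ((1 - z) / (2 * z)) with hxdef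
  have hx : 0 ≤ x := Real.sqrt_nonneg _
  have h := erfi_le hx
  have hE : (0:ℝ) ≤ Real.exp (-1 / (2 * z)) * Real.sqrt (z / (1 - z)) := by positivity
  calc gHom z ≤ Real.exp (-1 / (2 * z)) * Real.sqrt (z / (1 - z)) *
        (2 / Real.sqrt Real.pi * (Real.exp (x ^ 2) * x)) := by
        unfold gHom; exact mul_le_mul_of_nonneg_left h hE
    _ = 2 / Real.sqrt Real.pi *
        (Real.exp (-1 / (2 * z)) * Real.exp (x ^ 2)) *
        (Real.sqrt (z / (1 - z)) * x) := by ring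
    _ = 2 / Real.sqrt Real.pi * Real.exp (-(1/2)) * Real.sqrt (1/2) := by
        rw [key_exp hz hz1, key_mul hz hz1]
    _ = 2 / Real.sqrt Real.pi * Real.sqrt (1/2) * Real.exp (-(1/2)) := by ring

lemma gHom_le_lin {z : ℝ} (hz : 0 < z) (hz1 : z < 1) :
    gHom z ≤ 2 / Real.sqrt Real.pi * Real.sqrt 2 * Real.exp (-(1/2)) * (z / (1 - z)) := by
  set x := Real.sqrt ((1 - z) / (2 * z)) with hxdef
  have hxpos : 0 < x := Real.sqrt_pos.mpr (by apply div_pos <;> linarith)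
  have h := erfi_le' hxpos
  have hE : (0:ℝ) ≤ Real.exp (-1 / (2 * z)) * Real.sqrt (z / (1 - z)) := by positivity
  calc gHom z ≤ Real.exp (-1 / (2 * z)) * Real.sqrt (z / (1 - z)) *
        (2 / Real.sqrt Real.pi * (Real.exp (x ^ 2) / x)) := by
        unfold gHom; exact mul_le_mul_of_nonneg_left h hE
    _ = 2 / Real.sqrt Real.pi *
        (Real.exp (-1 / (2 * z)) * Real.exp (x ^ 2)) *
        (Real.sqrt (z / (1 - z)) / x) := by ring
    _ = 2 / Real.sqrt Real.pi * Real.exp (-(1/2)) * (Real.sqrt 2 * (z / (1 - z))) := by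
        rw [key_exp hz hz1, key_div hz hz1]
    _ = 2 / Real.sqrt Real.pi * Real.sqrt 2 * Real.exp (-(1/2)) * (z / (1 - z)) := by ring

/-- g is bounded on (0,1) and g(z) → 0 as z → 0⁺. -/
theorem gHom_bounded_and_vanishes :
    (∃ M : ℝ, ∀ z ∈ Set.Ioo (0 : ℝ) 1, |gHom z| ≤ M) ∧
    Filter.Tendsto gHom (nhdsWithin 0 (Set.Ioi 0)) (nhds 0) := by
  set C := 2 / Real.sqrt Real.pi * Real.sqrt 2 * Real.exp (-(1/2)) with hCdef
  have hC : 0 ≤ C := by positivity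
  constructor
  · refine ⟨2 / Real.sqrt Real.pi * Real.sqrt (1/2) * Real.exp (-(1/2)), fun z hz => ?_⟩
    rw [abs_of_nonneg (gHom_nonneg hz.1)]
    exact gHom_le_const hz.1 hz.2
  · have hev : ∀ᶠ z : ℝ in nhdsWithin 0 (Set.Ioi 0), 0 < z ∧ z < 1/2 := by
      filter_upwards [self_mem_nhdsWithin,
        mem_nhdsWithin_of_mem_nhds (Iio_mem_nhds (by norm_num : (0:ℝ) < 1/2))] with z h1 h2
      exact ⟨h1, h2⟩
    apply squeeze_zero' (g := fun z => C * (2 * z))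
    · filter_upwards [hev] with z hz using gHom_nonneg hz.1
    · filter_upwards [hev] with z hz
      have hz1 : z < 1 := by linarith [hz.2]
      refine (gHom_le_lin hz.1 hz1).trans ?_
      have h1z : (1:ℝ)/2 ≤ 1 - z := by linarith [hz.2]
      have : z / (1 - z) ≤ 2 * z := by
        rw [div_le_iff₀ (by linarith)]
        nlinarith [hz.1]
      exact mul_le_mul_of_nonneg_left this hC
    · have : Filter.Tendsto (fun z : ℝ => C * (2 * z)) (nhds 0) (nhds (C * (2 * 0))) :=
        (continuous_const.mul (continuous_const.mul continuous_id)).tendsto 0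
      simpa using this.mono_left nhdsWithin_le_nhds
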